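/- If w is a sink in a row-finite digraph Γ, then { p* : p a path in Γ with t(p) = w } is a k-basis of the right L_k(Γ)-module w L_k(Γ); moreover w L_k(Γ) is a simple L_k(Γ)-module if and only if k is a field. -/

import Mathlib

/-! Preamble: digraphs, paths, and Leavitt path algebras over a commutative ring. -/

structure DGraph : Type 1 where
  V : Type
  E : Type
  s : E → V
  t : E → V

namespace DGraph

/-- Generators of the Leavitt path algebra: vertices, arrows, ghost (dual) arrows. -/
inductive Gen (Γ : DGraph) : Type
  | vert : Γ.V → Gen Γ
  | edge : Γ.E → Gen Γ
  | ghost : Γ.E → Gen Γ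

variable (Γ : DGraph)

def IsSink (v : Γ.V) : Prop := ∀ e : Γ.E, Γ.s e ≠ v

def RowFinite : Prop := ∀ v : Γ.V, {e : Γ.E | Γ.s e = v}.Finite

/-- `IsWalkFrom v l` : the list of arrows `l` forms a path starting at `v`. -/
def IsWalkFrom : Γ.V → List Γ.E → Prop
  | _, [] => True
  | v, e :: l => Γ.s e = v ∧ IsWalkFrom (Γ.t e) l

/-- Target of a walk. -/
def walkTrg : Γ.V → List Γ.E → Γ.V
  | v, [] => v
  | _, e :: l => walkTrg (Γ.t e) l

/-- A (finite) path in `Γ`: a source vertex together with a compatible list of arrows.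
A path of length 0 is a single vertex. -/
structure Path (Γ : DGraph) : Type where
  src : Γ.V
  edges : List Γ.E
  valid : Γ.IsWalkFrom src edges

variable {Γ}

def Path.trg (p : Path Γ) : Γ.V := Γ.walkTrg p.src p.edges

/-- `q` is an initial segment of `p`, i.e. `p = q r`. -/
def IsInitialSegment (q p : Path Γ) : Prop := p.src = q.src ∧ q.edges <+: p.edges

/-- A cycle: a path of positive length from a vertex back to itself with pairwise
distinct sources of its arrows. -/
def Path.IsCycle (p : Path Γ) : Prop :=
  p.edges ≠ [] ∧ p.trg = p.src ∧ (p.edges.map Γ.s).Nodup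

/-- The vertex `v` is on the path `p`. -/
def Path.OnPath (p : Path Γ) (v : Γ.V) : Prop := p.src = v ∨ ∃ e ∈ p.edges, Γ.t e = v

/-- The path `p` has no exit: every arrow whose source is on `p` is an arrow of `p`. -/
def NoExit (p : Path Γ) : Prop := ∀ f : Γ.E, p.OnPath (Γ.s f) → f ∈ p.edges

variable (Γ)

/-- There is a path from `u` to `v`. -/
def Reaches (u v : Γ.V) : Prop := ∃ p : Path Γ, p.src = u ∧ p.trg = v

/-- The cycles of `Γ` are pairwise disjoint: two cycles sharing a vertex coincide
(up to rotation, i.e. they have the same arrows). -/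
def CyclesPairwiseDisjoint : Prop :=
  ∀ C D : Path Γ, C.IsCycle → D.IsCycle → (∃ v, C.OnPath v ∧ D.OnPath v) →
    C.edges.Perm D.edges

def Hereditary (H : Set Γ.V) : Prop := ∀ u v : Γ.V, u ∈ H → Γ.Reaches u v → v ∈ H

def Saturated (H : Set Γ.V) : Prop :=
  ∀ v : Γ.V, ¬ Γ.IsSink v → {e : Γ.E | Γ.s e = v}.Finite →
    (∀ e : Γ.E, Γ.s e = v → Γ.t e ∈ H) → v ∈ H

/-- The full subgraph of `Γ` on a set `W` of vertices. -/
abbrev restrict (W : Set Γ.V) : DGraph where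
  V := W
  E := {e : Γ.E // Γ.s e ∈ W ∧ Γ.t e ∈ W}
  s e := ⟨Γ.s e.1, e.2.1⟩
  t e := ⟨Γ.t e.1, e.2.2⟩

/-- The defining relations of the Leavitt path algebra, as a relation on the free
algebra on the generators: (V), (E), (CK1) and (CK2) (the latter imposed at every
vertex which is not a sink and emits finitely many arrows). -/
inductive LRel (k : Type) [CommRing k] (Γ : DGraph) :
    FreeAlgebra k (Gen Γ) → FreeAlgebra k (Gen Γ) → Prop
  | vert_idem (v : Γ.V) :
      LRel k Γ (FreeAlgebra.ι k (Gen.vert v) * FreeAlgebra.ι k (Gen.vert v))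
        (FreeAlgebra.ι k (Gen.vert v))
  | vert_orth (v w : Γ.V) : v ≠ w →
      LRel k Γ (FreeAlgebra.ι k (Gen.vert v) * FreeAlgebra.ι k (Gen.vert w)) 0
  | edge_src (e : Γ.E) :
      LRel k Γ (FreeAlgebra.ι k (Gen.vert (Γ.s e)) * FreeAlgebra.ι k (Gen.edge e))
        (FreeAlgebra.ι k (Gen.edge e))
  | edge_trg (e : Γ.E) :
      LRel k Γ (FreeAlgebra.ι k (Gen.edge e) * FreeAlgebra.ι k (Gen.vert (Γ.t e)))
        (FreeAlgebra.ι k (Gen.edge e))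
  | ghost_src (e : Γ.E) :
      LRel k Γ (FreeAlgebra.ι k (Gen.vert (Γ.t e)) * FreeAlgebra.ι k (Gen.ghost e))
        (FreeAlgebra.ι k (Gen.ghost e))
  | ghost_trg (e : Γ.E) :
      LRel k Γ (FreeAlgebra.ι k (Gen.ghost e) * FreeAlgebra.ι k (Gen.vert (Γ.s e)))
        (FreeAlgebra.ι k (Gen.ghost e))
  | ck1_same (e : Γ.E) :
      LRel k Γ (FreeAlgebra.ι k (Gen.ghost e) * FreeAlgebra.ι k (Gen.edge e))
        (FreeAlgebra.ι k (Gen.vert (Γ.t e)))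
  | ck1_diff (e f : Γ.E) : e ≠ f →
      LRel k Γ (FreeAlgebra.ι k (Gen.ghost e) * FreeAlgebra.ι k (Gen.edge f)) 0
  | ck2 (v : Γ.V) (h : {e : Γ.E | Γ.s e = v}.Finite) (hns : ¬ Γ.IsSink v) :
      LRel k Γ (FreeAlgebra.ι k (Gen.vert v))
        (∑ e ∈ h.toFinset, FreeAlgebra.ι k (Gen.edge e) * FreeAlgebra.ι k (Gen.ghost e))

/-- The (unitized) Leavitt path algebra of `Γ` over `k`.  For a digraph with finitely
many vertices, see `LVF` below where additionally `1 = Σ v` is imposed; in general the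
Leavitt path algebra proper is the (non-unital) subalgebra spanned by the nonempty
words in the generators, cf. `lpa`. -/
abbrev LV (k : Type) [CommRing k] (Γ : DGraph) : Type := RingQuot (LRel k Γ)

/-- The image of a generator in the Leavitt path algebra. -/
def genL (k : Type) [CommRing k] (Γ : DGraph) (g : Gen Γ) : LV k Γ :=
  RingQuot.mkAlgHom k (LRel k Γ) (FreeAlgebra.ι k g)

/-- For `Γ` with finitely many vertices, the relations of the Leavitt path algebra
together with `1 = Σ_{v ∈ V} v`. -/
def LRelU (k : Type) [CommRing k] (Γ : DGraph) [Fintype Γ.V] :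
    FreeAlgebra k (Gen Γ) → FreeAlgebra k (Gen Γ) → Prop :=
  fun a b => LRel k Γ a b ∨
    (a = 1 ∧ b = ∑ v : Γ.V, FreeAlgebra.ι k (Gen.vert v))

/-- The Leavitt path algebra of a digraph with finitely many vertices (a unital
algebra, with `1 = Σ_{v ∈ V} v`). -/
abbrev LVF (k : Type) [CommRing k] (Γ : DGraph) [Fintype Γ.V] : Type :=
  RingQuot (LRelU k Γ)

def genF (k : Type) [CommRing k] (Γ : DGraph) [Fintype Γ.V] (g : Gen Γ) : LVF k Γ :=
  RingQuot.mkAlgHom k (LRelU k Γ) (FreeAlgebra.ι k g)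

section Words

variable {k : Type} [CommRing k] {A : Type} [Ring A]

/-- The element `v e₁ ⋯ e_n` of an algebra `A`, given an interpretation `g` of the
generators. -/
def wordElem (g : Gen Γ → A) (v : Γ.V) (l : List Γ.E) : A :=
  g (Gen.vert v) * (l.map fun e => g (Gen.edge e)).prod

/-- The element `e_n* ⋯ e₁* v`. -/
def wordStar (g : Gen Γ → A) (v : Γ.V) (l : List Γ.E) : A :=
  (l.reverse.map fun e => g (Gen.ghost e)).prod * g (Gen.vert v)

variable {Γ}

/-- The element of the algebra corresponding to a path `p`. -/
def pElem (g : Gen Γ → A) (p : Path Γ) : A := wordElem Γ g p.src p.edges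

/-- The element of the algebra corresponding to the dual path `p*`. -/
def pStar (g : Gen Γ → A) (p : Path Γ) : A := wordStar Γ g p.src p.edges

/-- `Cⁿ` for `n ∈ ℤ`, with `C⁰ := s(C)` and `C⁻ⁿ := (C*)ⁿ`. -/
def cycPow (g : Gen Γ → A) (C : Path Γ) (n : ℤ) : A :=
  if n = 0 then g (Gen.vert C.src)
  else if 0 < n then pElem g C ^ n.toNat
  else pStar g C ^ (-n).toNat

end Words

/-- The k-submodule of the unitized algebra `LV k Γ` spanned by the nonempty words
in the generators: this is the Leavitt path algebra proper (a two-sided ideal). -/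
def lpa (k : Type) [CommRing k] (Γ : DGraph) : Submodule k (LV k Γ) :=
  Submodule.span k
    {x : LV k Γ | ∃ l : List (Gen Γ), l ≠ [] ∧ x = (l.map (genL k Γ)).prod}

/-- The image of the path algebra `kΓ` in `LV k Γ`: the k-span of the paths. -/
def pathSpan (k : Type) [CommRing k] (Γ : DGraph) : Submodule k (LV k Γ) :=
  Submodule.span k (Set.range (pElem (genL k Γ)))

/-- The right ideal generated by an element `a` of a ring `A` (a submodule for the
right action of `A`, i.e. an `Aᵐᵒᵖ`-submodule). -/
def rIdeal (A : Type) [Ring A] (a : A) : Submodule Aᵐᵒᵖ A :=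
  Submodule.span Aᵐᵒᵖ {a}

/-- A right `LV k Γ`-module (i.e. left `(LV k Γ)ᵐᵒᵖ`-module) is unital if
`M = M ⬝ L(Γ)`, equivalently every element is a finite sum of elements of `M·v·L`. -/
def IsUnitalMod (k : Type) [CommRing k] (Γ : DGraph) (M : Type) [AddCommGroup M]
    [Module (LV k Γ)ᵐᵒᵖ M] : Prop :=
  ∀ m : M, m ∈ Submodule.span (LV k Γ)ᵐᵒᵖ
    {x : M | ∃ (v : Γ.V) (y : M), x = (MulOpposite.op (genL k Γ (Gen.vert v))) • y}

/-- One-step reduction of `Γ` at a loopless vertex `v`: paths of length two through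
`v` become new arrows, and `v` together with all arrows touching it is deleted. -/
abbrev reduceAt (v : Γ.V) (hl : ∀ e : Γ.E, Γ.s e = v → Γ.t e ≠ v) : DGraph where
  V := {u : Γ.V // u ≠ v}
  E := {e : Γ.E // Γ.s e ≠ v ∧ Γ.t e ≠ v} ⊕
       {fg : Γ.E × Γ.E // Γ.t fg.1 = v ∧ Γ.s fg.2 = v}
  s := fun x => match x with
    | Sum.inl e => ⟨Γ.s e.1, e.2.1⟩
    | Sum.inr fg => ⟨Γ.s fg.1.1, fun h => hl fg.1.1 h fg.2.1⟩
  t := fun x => match x with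
    | Sum.inl e => ⟨Γ.t e.1, e.2.2⟩
    | Sum.inr fg => ⟨Γ.t fg.1.2, fun h => hl fg.1.2 fg.2.2 h⟩

/-- The homogeneous component of degree `g` of `LV k Γ` with respect to a degree
assignment `d` on the generators, with values in a group `G`. -/
def gcomp (k : Type) [CommRing k] (Γ : DGraph) {G : Type} [Group G]
    (d : Gen Γ → G) (g : G) : Submodule k (LV k Γ) :=
  Submodule.span k
    {x : LV k Γ | ∃ l : List (Gen Γ), (l.map d).prod = g ∧ x = (l.map (genL k Γ)).prod}

/-- The universal degree assignment, with values in the free group on the arrows. -/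
def dUniv (Γ : DGraph) : Gen Γ → FreeGroup Γ.E
  | Gen.vert _ => 1
  | Gen.edge e => FreeGroup.of e
  | Gen.ghost e => (FreeGroup.of e)⁻¹

end DGraph

/-- Gelfand–Kirillov dimension of an `F`-algebra (value in `ℝ≥0∞`):
`limsup_n log dim(Wⁿ)/log n` for a finite-dimensional generating subspace `W`
containing `1` (the supremum is taken over all such `W`; for a finitely generated
algebra the value does not depend on the choice). -/
noncomputable def gkDim (F A : Type) [Field F] [Ring A] [Algebra F A] : ENNReal :=
  ⨆ W : {W : Submodule F A //
      FiniteDimensional F W ∧ (1 : A) ∈ W ∧ ∀ x : A, ∃ n : ℕ, x ∈ (W : Submodule F A) ^ n},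
    Filter.limsup (fun n : ℕ =>
      ENNReal.ofReal
        (Real.log (Module.finrank F ↥((W : Submodule F A) ^ n)) / Real.log n))
      Filter.atTop

/-- A module is indecomposable if it is nonzero and admits no nontrivial direct sum
decomposition. -/
def IsIndecomposableModule (R M : Type) [Ring R] [AddCommGroup M] [Module R M] : Prop :=
  Nontrivial M ∧ ∀ A B : Submodule R M, IsCompl A B → A = ⊥ ∨ B = ⊥

/-!
The right ideal `w L` is modelled on the free `k`-module on the paths ending at `w`. A generator
acts on the basis vector of `p` through the partial map `step`, which is right multiplication of
`p*` by that generator: a vertex keeps `p` if `p` starts there, an arrow `e` deletes a leading `e`,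
and a ghost `e*` prepends `e`. These maps satisfy the Leavitt relations, (CK2) because a path that
ends at the sink `w` and starts elsewhere has a first arrow, so the free module is a right
`L`-module in which `δ_w · p* = δ_p`. Hence the `p*` are linearly independent; they span `w L`
because `p* g` is again `0` or some `q*`. Since moreover `q* p = δ_{q,p} w`, the algebra acts on
`w L` through all the matrix units `E_{p,w}` and `E_{w,p}`, and a free module with such an action is
simple exactly when every nonzero scalar is invertible.
-/

section SimpleFreeModule

variable {k R M ι : Type*} [CommRing k] [Ring R] [Algebra k R] [AddCommGroup M] [Module R M]
  [Module k M] [IsScalarTower k R M]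

variable (R) in
theorem isField_of_isSimpleModule_of_basis [IsSimpleModule R M] (b : Module.Basis ι k M) :
    IsField k := by
  have := IsSimpleModule.nontrivial R M
  have := Module.nontrivial k M
  obtain ⟨i₀⟩ := b.index_nonempty
  refine ⟨exists_pair_ne k, mul_comm, fun {c} hc => ?_⟩
  have hcb : c • b i₀ ≠ 0 := fun h => hc (by simpa using congrArg (fun m => b.repr m i₀) h)
  obtain ⟨r, hr⟩ := IsSimpleModule.toSpanSingleton_surjective R hcb (b i₀)
  refine ⟨b.repr (r • b i₀) i₀, ?_⟩
  simpa [smul_comm r c] using congrArg (fun m => b.repr m i₀) hr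

theorem isSimpleModule_of_basis [DecidableEq ι] (hk : IsField k) (b : Module.Basis ι k M)
    (i₀ : ι) (spread : ∀ i, ∃ r : R, r • b i₀ = b i)
    (collect : ∀ i, ∃ r : R, ∀ j, r • b j = if j = i then b i₀ else 0) :
    IsSimpleModule R M := by
  let := hk.toField
  have hspan : Submodule.span R {b i₀} = ⊤ := by
    refine top_le_iff.mp fun m _ => ?_
    rw [← b.linearCombination_repr m, Finsupp.linearCombination_apply]
    refine Submodule.sum_mem _ fun i _ => ?_
    obtain ⟨r, hr⟩ := spread i
    show b.repr m i • b i ∈ _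
    rw [← hr, ← smul_assoc]
    exact Submodule.smul_mem _ _ (Submodule.mem_span_singleton_self _)
  refine isSimpleModule_iff_toSpanSingleton_surjective.mpr
    ⟨⟨b i₀, 0, b.ne_zero i₀⟩, fun m hm => ?_⟩
  obtain ⟨i, hi⟩ : ∃ i, b.repr m i ≠ 0 := by
    by_contra! h
    exact hm (b.ext_elem_iff.mpr (by simpa using h))
  obtain ⟨r, hr⟩ := collect i
  have hrm : r • m = b.repr m i • b i₀ := by
    have : DistribSMul.toLinearMap k M r = (b.coord i).smulRight (b i₀) :=
      b.ext fun j => by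
        rw [DistribSMul.toLinearMap_apply, hr]
        by_cases hj : j = i <;> simp [hj, Ne.symm]
    exact LinearMap.congr_fun this m
  have hbm : b i₀ = ((b.repr m i)⁻¹ • r) • m := by
    rw [smul_assoc, hrm, smul_smul, inv_mul_cancel₀ hi, one_smul]
  rw [← LinearMap.range_eq_top, ← LinearMap.span_singleton_eq_range, eq_top_iff, ← hspan,
    Submodule.span_singleton_le_iff_mem, hbm]
  exact Submodule.smul_mem _ _ (Submodule.mem_span_singleton_self _)

end SimpleFreeModule

namespace DGraph

open scoped Classical
open MulOpposite

variable {Γ : DGraph}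

attribute [ext] Path

def Path.cons (e : Γ.E) (p : Path Γ) (h : Γ.t e = p.src) : Path Γ :=
  ⟨Γ.s e, e :: p.edges, ⟨rfl, h ▸ p.valid⟩⟩

theorem Path.trg_cons (e : Γ.E) (p : Path Γ) (h : Γ.t e = p.src) :
    (p.cons e h).trg = p.trg := by
  simp only [Path.trg, Path.cons, walkTrg, h]

abbrev PathTo (Γ : DGraph) (w : Γ.V) : Type := {p : Path Γ // p.trg = w}

def PathTo.nil (w : Γ.V) : PathTo Γ w := ⟨⟨w, [], trivial⟩, rfl⟩

variable {w : Γ.V}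

theorem PathTo.eq_nil_of_src_eq (hw : Γ.IsSink w) (p : PathTo Γ w) (h : p.1.src = w) :
    p = PathTo.nil w := by
  obtain ⟨⟨v, _ | ⟨e, l⟩, hv⟩, hp⟩ := p
  · exact Subtype.ext (Path.ext h rfl)
  · exact absurd (hv.1.trans h) (hw e)

noncomputable def step : Gen Γ → PathTo Γ w → Option (PathTo Γ w)
  | .vert v, p => if p.1.src = v then some p else none
  | .edge e, ⟨⟨_, f :: l, h⟩, hp⟩ =>
    if f = e then some ⟨⟨Γ.t f, l, h.2⟩, hp⟩ else none
  | .edge _, ⟨⟨_, [], _⟩, _⟩ => none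
  | .ghost e, p =>
    if h : Γ.t e = p.1.src then some ⟨p.1.cons e h, (p.1.trg_cons e h).trans p.2⟩ else none

section

variable (p : PathTo Γ w)

theorem step_vert_bind_vert_self (v : Γ.V) :
    (step (.vert v) p).bind (step (.vert v)) = step (.vert v) p := by
  by_cases h : p.1.src = v <;> simp [step, h]

theorem step_vert_bind_vert_of_ne {v u : Γ.V} (hvu : v ≠ u) :
    (step (.vert v) p).bind (step (.vert u)) = none := by
  by_cases h : p.1.src = v <;> simp [step, h, hvu]

theorem step_vert_src_bind_edge (e : Γ.E) :
    (step (.vert (Γ.s e)) p).bind (step (.edge e)) = step (.edge e) p := by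
  obtain ⟨⟨v, _ | ⟨f, l⟩, hv⟩, hp⟩ := p
  · by_cases h : v = Γ.s e <;> simp [step, h]
  · by_cases h : f = e
    · subst h; simp [step, hv.1.symm]
    · by_cases h' : v = Γ.s e <;> simp [step, h, h']

theorem step_edge_bind_vert_trg (e : Γ.E) :
    (step (.edge e) p).bind (step (.vert (Γ.t e))) = step (.edge e) p := by
  obtain ⟨⟨v, _ | ⟨f, l⟩, hv⟩, hp⟩ := p
  · simp [step]
  · by_cases h : f = e <;> simp [step, h]

theorem step_vert_trg_bind_ghost (e : Γ.E) :
    (step (.vert (Γ.t e)) p).bind (step (.ghost e)) = step (.ghost e) p := by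
  by_cases h : Γ.t e = p.1.src
  · simp [step, h]
  · simp [step, h, Ne.symm h]

theorem step_ghost_bind_vert_src (e : Γ.E) :
    (step (.ghost e) p).bind (step (.vert (Γ.s e))) = step (.ghost e) p := by
  by_cases h : Γ.t e = p.1.src <;> simp [step, h, Path.cons]

theorem step_ghost_bind_edge_self (e : Γ.E) :
    (step (.ghost e) p).bind (step (.edge e)) = step (.vert (Γ.t e)) p := by
  by_cases h : Γ.t e = p.1.src
  · simp [step, h, Path.cons]
  · simp [step, h, Ne.symm h]

theorem step_ghost_bind_edge_of_ne {e f : Γ.E} (hef : e ≠ f) :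
    (step (.ghost e) p).bind (step (.edge f)) = none := by
  by_cases h : Γ.t e = p.1.src <;> simp [step, h, Path.cons, hef]

theorem step_edge_bind_ghost_self (e : Γ.E) :
    (step (.edge e) p).bind (step (.ghost e)) =
      if p.1.edges.head? = some e then some p else none := by
  obtain ⟨⟨v, _ | ⟨f, l⟩, hv⟩, hp⟩ := p
  · simp [step]
  · by_cases h : f = e
    · subst h; simp [step, Path.cons, hv.1]
    · simp [step, h]

end

variable (k : Type) [CommRing k]

theorem genL_mul_genL_of_rel {a b : Gen Γ} {c : FreeAlgebra k (Gen Γ)}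
    (h : LRel k Γ (FreeAlgebra.ι k a * FreeAlgebra.ι k b) c) :
    genL k Γ a * genL k Γ b = RingQuot.mkAlgHom k (LRel k Γ) c := by
  rw [genL, genL, ← map_mul]
  exact RingQuot.mkAlgHom_rel k h

theorem vert_mul_vert (v u : Γ.V) :
    genL k Γ (.vert v) * genL k Γ (.vert u) = if v = u then genL k Γ (.vert v) else 0 := by
  split_ifs with h
  · subst h; exact genL_mul_genL_of_rel k (.vert_idem v)
  · rw [genL_mul_genL_of_rel k (.vert_orth v u h), map_zero]

theorem vert_src_mul_edge (e : Γ.E) :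
    genL k Γ (.vert (Γ.s e)) * genL k Γ (.edge e) = genL k Γ (.edge e) :=
  genL_mul_genL_of_rel k (.edge_src e)

theorem edge_mul_vert_trg (e : Γ.E) :
    genL k Γ (.edge e) * genL k Γ (.vert (Γ.t e)) = genL k Γ (.edge e) :=
  genL_mul_genL_of_rel k (.edge_trg e)

theorem vert_trg_mul_ghost (e : Γ.E) :
    genL k Γ (.vert (Γ.t e)) * genL k Γ (.ghost e) = genL k Γ (.ghost e) :=
  genL_mul_genL_of_rel k (.ghost_src e)

theorem ghost_mul_vert_src (e : Γ.E) :
    genL k Γ (.ghost e) * genL k Γ (.vert (Γ.s e)) = genL k Γ (.ghost e) :=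
  genL_mul_genL_of_rel k (.ghost_trg e)

theorem ghost_mul_edge (e f : Γ.E) :
    genL k Γ (.ghost e) * genL k Γ (.edge f) =
      if e = f then genL k Γ (.vert (Γ.t e)) else 0 := by
  split_ifs with h
  · subst h; exact genL_mul_genL_of_rel k (.ck1_same e)
  · rw [genL_mul_genL_of_rel k (.ck1_diff e f h), map_zero]

theorem vert_mul_edge_of_ne {v : Γ.V} {e : Γ.E} (h : v ≠ Γ.s e) :
    genL k Γ (.vert v) * genL k Γ (.edge e) = 0 := by
  rw [← vert_src_mul_edge, ← mul_assoc, vert_mul_vert, if_neg h, zero_mul]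

theorem vert_mul_ghost_of_ne {v : Γ.V} {e : Γ.E} (h : v ≠ Γ.t e) :
    genL k Γ (.vert v) * genL k Γ (.ghost e) = 0 := by
  rw [← vert_trg_mul_ghost, ← mul_assoc, vert_mul_vert, if_neg h, zero_mul]

theorem wordStar_nil (v : Γ.V) : wordStar Γ (genL k Γ) v [] = genL k Γ (.vert v) := by
  simp [wordStar]

theorem wordStar_cons (v : Γ.V) (e : Γ.E) (l : List Γ.E) :
    wordStar Γ (genL k Γ) v (e :: l) =
      wordStar Γ (genL k Γ) (Γ.t e) l * (genL k Γ (.ghost e) * genL k Γ (.vert v)) := by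
  simp only [wordStar, List.reverse_cons, List.map_append, List.prod_append, List.map_cons,
    List.map_nil, List.prod_cons, List.prod_nil, mul_one, mul_assoc,
    ← mul_assoc (genL k Γ _) (genL k Γ (.ghost e)), vert_trg_mul_ghost]

theorem wordStar_mul_vert_self (v : Γ.V) (l : List Γ.E) :
    wordStar Γ (genL k Γ) v l * genL k Γ (.vert v) = wordStar Γ (genL k Γ) v l := by
  rw [wordStar, mul_assoc, vert_mul_vert, if_pos rfl]

theorem vert_trg_mul_wordStar (v : Γ.V) (l : List Γ.E) :
    genL k Γ (.vert (Γ.walkTrg v l)) * wordStar Γ (genL k Γ) v l =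
      wordStar Γ (genL k Γ) v l := by
  induction l generalizing v with
  | nil => rw [wordStar_nil, vert_mul_vert]; exact if_pos rfl
  | cons e l ih => rw [wordStar_cons, ← mul_assoc, walkTrg, ih]

theorem wordElem_cons (e : Γ.E) (l : List Γ.E) :
    wordElem Γ (genL k Γ) (Γ.s e) (e :: l) =
      genL k Γ (.edge e) * wordElem Γ (genL k Γ) (Γ.t e) l := by
  simp only [wordElem, List.map_cons, List.prod_cons, ← mul_assoc, vert_src_mul_edge,
    edge_mul_vert_trg]

noncomputable def optSingle : Option (PathTo Γ w) → (PathTo Γ w →₀ k) :=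
  fun o => o.elim 0 (Finsupp.single · 1)

noncomputable def genAct (w : Γ.V) (g : Gen Γ) : Module.End k (PathTo Γ w →₀ k) :=
  Finsupp.linearCombination k fun p => optSingle k (step g p)

theorem optSingle_ite (c : Prop) [Decidable c] (p : PathTo Γ w) :
    optSingle k (if c then some p else none) = if c then Finsupp.single p 1 else 0 := by
  split_ifs <;> rfl

theorem genAct_single (g : Gen Γ) (p : PathTo Γ w) :
    genAct k w g (Finsupp.single p 1) = optSingle k (step g p) := by
  simp [genAct]

theorem genAct_optSingle (g : Gen Γ) (o : Option (PathTo Γ w)) :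
    genAct k w g (optSingle k o) = optSingle k (o.bind (step g)) := by
  cases o with
  | none => simp [optSingle]
  | some p => exact genAct_single k g p

theorem genAct_mul_genAct {a b c : Gen Γ}
    (h : ∀ p : PathTo Γ w, (step a p).bind (step b) = step c p) :
    genAct k w b * genAct k w a = genAct k w c := by
  ext p : 2
  simp [genAct_single, genAct_optSingle, h]

theorem genAct_mul_genAct_eq_zero {a b : Gen Γ}
    (h : ∀ p : PathTo Γ w, (step a p).bind (step b) = none) :
    genAct k w b * genAct k w a = 0 := by
  ext p : 2
  simp only [LinearMap.coe_comp, Function.comp_apply, Finsupp.lsingle_apply, Module.End.mul_apply,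
    genAct_single, genAct_optSingle, h]
  rfl

theorem genAct_vert_eq_sum (hw : Γ.IsSink w) (v : Γ.V) (hv : {e : Γ.E | Γ.s e = v}.Finite)
    (hns : ¬ Γ.IsSink v) :
    genAct k w (.vert v) = ∑ e ∈ hv.toFinset, genAct k w (.ghost e) * genAct k w (.edge e) := by
  ext p : 2
  simp only [LinearMap.coe_comp, Function.comp_apply, Finsupp.lsingle_apply, LinearMap.coe_sum,
    Finset.sum_apply, Module.End.mul_apply, genAct_single, genAct_optSingle,
    step_edge_bind_ghost_self]
  obtain ⟨⟨u, _ | ⟨f, l⟩, hu⟩, hp⟩ := p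
  · have huw : u = w := hp
    have : u ≠ v := by rintro rfl; exact hns (huw ▸ hw)
    simp [step, optSingle, this]
  · simp [step, optSingle_ite, ← hu.1, Finset.sum_ite_eq, hv.mem_toFinset]

theorem genAct_respects_rel (hw : Γ.IsSink w) ⦃x y : FreeAlgebra k (Gen Γ)⦄
    (h : LRel k Γ x y) :
    FreeAlgebra.lift k (fun g => op (genAct k w g)) x =
      FreeAlgebra.lift k (fun g => op (genAct k w g)) y := by
  cases h <;> simp only [map_mul, map_zero, map_sum, FreeAlgebra.lift_ι_apply, ← op_mul,
    ← Finset.op_sum, op_inj, op_eq_zero_iff]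
  case vert_idem v => exact genAct_mul_genAct k (step_vert_bind_vert_self · v)
  case vert_orth v u hvu => exact genAct_mul_genAct_eq_zero k (step_vert_bind_vert_of_ne · hvu)
  case edge_src e => exact genAct_mul_genAct k (step_vert_src_bind_edge · e)
  case edge_trg e => exact genAct_mul_genAct k (step_edge_bind_vert_trg · e)
  case ghost_src e => exact genAct_mul_genAct k (step_vert_trg_bind_ghost · e)
  case ghost_trg e => exact genAct_mul_genAct k (step_ghost_bind_vert_src · e)
  case ck1_same e => exact genAct_mul_genAct k (step_ghost_bind_edge_self · e)
  case ck1_diff e f hef => exact genAct_mul_genAct_eq_zero k (step_ghost_bind_edge_of_ne · hef)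
  case ck2 v hv hns => exact genAct_vert_eq_sum k hw v hv hns

noncomputable def rightRep (hw : Γ.IsSink w) :
    LV k Γ →ₐ[k] (Module.End k (PathTo Γ w →₀ k))ᵐᵒᵖ :=
  RingQuot.liftAlgHom k ⟨_, genAct_respects_rel k hw⟩

noncomputable def pathCoords (hw : Γ.IsSink w) : LV k Γ →ₗ[k] PathTo Γ w →₀ k :=
  LinearMap.applyₗ (Finsupp.single (PathTo.nil w) 1) ∘ₗ
    (opLinearEquiv k).symm.toLinearMap ∘ₗ (rightRep k hw).toLinearMap

theorem pathCoords_one (hw : Γ.IsSink w) :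
    pathCoords k hw 1 = Finsupp.single (PathTo.nil w) 1 := by
  simp [pathCoords]

theorem pathCoords_mul_genL (hw : Γ.IsSink w) (x : LV k Γ) (g : Gen Γ) :
    pathCoords k hw (x * genL k Γ g) = genAct k w g (pathCoords k hw x) := by
  simp [pathCoords, rightRep, genL]

theorem pathCoords_wordStar (hw : Γ.IsSink w) (v : Γ.V) (l : List Γ.E) (hl : Γ.IsWalkFrom v l)
    (hlw : Γ.walkTrg v l = w) :
    pathCoords k hw (wordStar Γ (genL k Γ) v l) = Finsupp.single ⟨⟨v, l, hl⟩, hlw⟩ 1 := by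
  induction l generalizing v with
  | nil =>
    obtain rfl : v = w := hlw
    rw [wordStar_nil, ← one_mul (genL k Γ _), pathCoords_mul_genL, pathCoords_one, genAct_single]
    simp [step, optSingle, PathTo.nil]
  | cons e l ih =>
    obtain ⟨rfl, hl'⟩ := hl
    rw [wordStar_cons, ← mul_assoc, pathCoords_mul_genL, pathCoords_mul_genL, ih _ hl' hlw]
    simp [genAct_single, step, optSingle, Path.cons]

theorem linearIndependent_pStar (hw : Γ.IsSink w) :
    LinearIndependent k fun p : PathTo Γ w => pStar (genL k Γ) p.1 := by
  refine LinearIndependent.of_comp (pathCoords k hw) ?_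
  have hcoords (p : PathTo Γ w) : pathCoords k hw (pStar (genL k Γ) p.1) = Finsupp.single p 1 :=
    pathCoords_wordStar k hw p.1.src p.1.edges p.1.valid p.2
  simpa [Function.comp_def, hcoords] using
    (Finsupp.basisSingleOne : Module.Basis (PathTo Γ w) k _).linearIndependent

theorem pStar_mul_genL (hw : Γ.IsSink w) (p : PathTo Γ w) (g : Gen Γ) :
    pStar (genL k Γ) p.1 * genL k Γ g = (step g p).elim 0 fun q => pStar (genL k Γ) q.1 := by
  cases g with
  | vert u =>
    by_cases h : p.1.src = u
    · subst h; simp [step, pStar, wordStar_mul_vert_self]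
    · simp [step, h, pStar, wordStar, mul_assoc, vert_mul_vert]
  | edge e =>
    obtain ⟨⟨v, _ | ⟨f, l⟩, hv⟩, hp⟩ := p
    · have hvw : v = w := hp
      simp [step, pStar, wordStar, vert_mul_edge_of_ne k (e := e) (hvw ▸ (hw e).symm)]
    · obtain rfl : Γ.s f = v := hv.1
      by_cases h : f = e
      · subst h
        simp [step, pStar, wordStar_cons, ghost_mul_vert_src, mul_assoc, ghost_mul_edge,
          wordStar_mul_vert_self]
      · simp [step, pStar, wordStar_cons, ghost_mul_vert_src, mul_assoc, ghost_mul_edge, h]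
  | ghost e =>
    by_cases h : Γ.t e = p.1.src
    · simp [step, h, pStar, Path.cons, wordStar_cons, ghost_mul_vert_src]
    · simp [step, h, pStar, wordStar, mul_assoc, vert_mul_ghost_of_ne k (Ne.symm h)]

theorem pStar_mul_wordElem (hw : Γ.IsSink w) (q : PathTo Γ w) (v : Γ.V) (l : List Γ.E)
    (hl : Γ.IsWalkFrom v l) (hlw : Γ.walkTrg v l = w) :
    pStar (genL k Γ) q.1 * wordElem Γ (genL k Γ) v l =
      if q = ⟨⟨v, l, hl⟩, hlw⟩ then genL k Γ (.vert w) else 0 := by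
  induction l generalizing v q with
  | nil =>
    obtain rfl : v = w := hlw
    have : wordElem Γ (genL k Γ) v [] = genL k Γ (.vert v) := by simp [wordElem]
    rw [this, pStar_mul_genL k hw]
    by_cases h : q.1.src = v
    · obtain rfl := q.eq_nil_of_src_eq hw h
      simp [step, PathTo.nil, pStar, wordStar_nil]
    · simp [step, h, Subtype.ext_iff, Path.ext_iff]
  | cons e l ih =>
    obtain ⟨rfl, hl'⟩ := hl
    rw [wordElem_cons, ← mul_assoc, pStar_mul_genL k hw]
    obtain ⟨⟨u, _ | ⟨f, l'⟩, hu⟩, hq⟩ := q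
    · simp [step, Subtype.ext_iff, Path.ext_iff]
    · by_cases h : f = e
      · subst h
        simpa [step, hu.1, Subtype.ext_iff, Path.ext_iff] using
          ih ⟨⟨Γ.t f, l', hu.2⟩, hq⟩ (Γ.t f) hl' hlw
      · simp [step, h, Subtype.ext_iff, Path.ext_iff]

theorem pStar_mul_pElem (hw : Γ.IsSink w) (q p : PathTo Γ w) :
    pStar (genL k Γ) q.1 * pElem (genL k Γ) p.1 = if q = p then genL k Γ (.vert w) else 0 :=
  pStar_mul_wordElem k hw q p.1.src p.1.edges p.1.valid p.2

theorem pStar_nil : pStar (genL k Γ) (PathTo.nil w).1 = genL k Γ (.vert w) :=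
  wordStar_nil k w

theorem vert_mul_pStar (p : PathTo Γ w) :
    genL k Γ (.vert w) * pStar (genL k Γ) p.1 = pStar (genL k Γ) p.1 := by
  obtain ⟨⟨v, l, _⟩, rfl⟩ := p
  exact vert_trg_mul_wordStar k v l

theorem pStar_mem_rIdeal (p : PathTo Γ w) :
    pStar (genL k Γ) p.1 ∈ rIdeal (LV k Γ) (genL k Γ (.vert w)) := by
  rw [← vert_mul_pStar, ← op_smul_eq_mul]
  exact Submodule.smul_mem _ _ (Submodule.mem_span_singleton_self _)

abbrev pStarSpan (Γ : DGraph) (w : Γ.V) : Submodule k (LV k Γ) :=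
  Submodule.span k (Set.range fun p : PathTo Γ w => pStar (genL k Γ) p.1)

theorem mul_genL_mem_pStarSpan (hw : Γ.IsSink w) (g : Gen Γ) {x : LV k Γ}
    (hx : x ∈ pStarSpan k Γ w) : x * genL k Γ g ∈ pStarSpan k Γ w := by
  induction hx using Submodule.span_induction with
  | mem x hx =>
    obtain ⟨p, rfl⟩ := hx
    rw [pStar_mul_genL k hw]
    cases step g p with
    | none => exact Submodule.zero_mem _
    | some q => exact Submodule.subset_span ⟨q, rfl⟩
  | zero => simp
  | add x y _ _ hx hy => simpa [add_mul] using Submodule.add_mem _ hx hy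
  | smul c x _ hx => simpa [smul_mul_assoc] using Submodule.smul_mem _ c hx

theorem mul_mem_pStarSpan (hw : Γ.IsSink w) (a : LV k Γ) {x : LV k Γ}
    (hx : x ∈ pStarSpan k Γ w) : x * a ∈ pStarSpan k Γ w := by
  obtain ⟨a, rfl⟩ := RingQuot.mkAlgHom_surjective k (LRel k Γ) a
  induction a using FreeAlgebra.induction generalizing x with
  | grade0 r =>
    rw [AlgHom.commutes, ← Algebra.commutes, ← Algebra.smul_def]
    exact Submodule.smul_mem _ r hx
  | grade1 g => exact mul_genL_mem_pStarSpan k hw g hx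
  | mul a b ha hb => simpa [mul_assoc] using hb (ha hx)
  | add a b ha hb => simpa [mul_add] using Submodule.add_mem _ (ha hx) (hb hx)

theorem coe_pStarSpan (hw : Γ.IsSink w) :
    (pStarSpan k Γ w : Set (LV k Γ)) = rIdeal (LV k Γ) (genL k Γ (.vert w)) := by
  refine subset_antisymm (fun x hx => ?_) (fun x hx => ?_)
  · refine Submodule.span_le (p := (rIdeal _ _).restrictScalars k).mpr ?_ hx
    rintro _ ⟨p, rfl⟩
    exact pStar_mem_rIdeal k p
  · induction hx using Submodule.span_induction with
    | mem x hx =>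
      rw [Set.mem_singleton_iff.mp hx, ← pStar_nil]
      exact Submodule.subset_span ⟨_, rfl⟩
    | zero => exact Submodule.zero_mem _
    | add x y _ _ hx hy => exact Submodule.add_mem _ hx hy
    | smul a x _ hx => exact mul_mem_pStarSpan k hw a.unop hx

theorem exists_basis_rIdeal (hw : Γ.IsSink w) :
    ∃ b : Module.Basis (PathTo Γ w) k (rIdeal (LV k Γ) (genL k Γ (.vert w))),
      ∀ p, (b p : LV k Γ) = pStar (genL k Γ) p.1 :=
  ⟨(Module.Basis.span (linearIndependent_pStar k hw)).map
      (.ofEq _ ((rIdeal _ _).restrictScalars k) (SetLike.coe_injective (coe_pStarSpan k hw))),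
    fun p => congrArg Subtype.val (Module.Basis.span_apply (linearIndependent_pStar k hw) p)⟩

end DGraph

open DGraph in
theorem sink_right_ideal_basis_and_simple_general (k : Type) [CommRing k] (Γ : DGraph)
    (w : Γ.V) (hw : Γ.IsSink w) :
    (∃ b : Module.Basis {p : Path Γ // p.trg = w} k
        ↥(Submodule.span k (Set.range fun p : {p : Path Γ // p.trg = w} =>
            pStar (genL k Γ) p.1)),
      ∀ p, (b p : LV k Γ) = pStar (genL k Γ) p.1) ∧
    ((Submodule.span k (Set.range fun p : {p : Path Γ // p.trg = w} =>
        pStar (genL k Γ) p.1) : Set (LV k Γ))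
      = (rIdeal (LV k Γ) (genL k Γ (Gen.vert w)) : Set (LV k Γ))) ∧
    (IsSimpleModule (LV k Γ)ᵐᵒᵖ ↥(rIdeal (LV k Γ) (genL k Γ (Gen.vert w)))
      ↔ IsField k) := by
  classical
  refine ⟨⟨.span (linearIndependent_pStar k hw), fun p => by rw [Module.Basis.span_apply]⟩,
    coe_pStarSpan k hw, ?_⟩
  obtain ⟨b, hb⟩ := exists_basis_rIdeal k hw
  have spread (p : PathTo Γ w) :
      MulOpposite.op (pStar (genL k Γ) p.1) • b (PathTo.nil w) = b p :=
    Subtype.ext (by simp [hb, pStar_nil, vert_mul_pStar])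
  have collect (p q : PathTo Γ w) :
      MulOpposite.op (pElem (genL k Γ) p.1) • b q = if q = p then b (PathTo.nil w) else 0 :=
    Subtype.ext (by simp [hb, pStar_mul_pElem k hw, apply_ite Subtype.val, pStar_nil])
  exact ⟨fun _ => isField_of_isSimpleModule_of_basis (LV k Γ)ᵐᵒᵖ
      (M := rIdeal (LV k Γ) (genL k Γ (.vert w))) b,
    fun hk => isSimpleModule_of_basis hk b (PathTo.nil w) (fun p => ⟨_, spread p⟩)
      (fun p => ⟨_, collect p⟩)⟩

open DGraph in
/-- for a sink `w`, `{p* : t(p) = w}` is a `k`-basis of the right ideal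
`w L_k(Γ)`, and `w L_k(Γ)` is a simple right `L_k(Γ)`-module iff `k` is a field. -/
theorem sink_right_ideal_basis_and_simple (k : Type) [CommRing k] (Γ : DGraph)
    (hrf : Γ.RowFinite) (w : Γ.V) (hw : Γ.IsSink w) :
    (∃ b : Module.Basis {p : Path Γ // p.trg = w} k
        ↥(Submodule.span k (Set.range fun p : {p : Path Γ // p.trg = w} =>
            pStar (genL k Γ) p.1)),
      ∀ p, (b p : LV k Γ) = pStar (genL k Γ) p.1) ∧
    ((Submodule.span k (Set.range fun p : {p : Path Γ // p.trg = w} =>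
        pStar (genL k Γ) p.1) : Set (LV k Γ))
      = (rIdeal (LV k Γ) (genL k Γ (Gen.vert w)) : Set (LV k Γ))) ∧
    (IsSimpleModule (LV k Γ)ᵐᵒᵖ ↥(rIdeal (LV k Γ) (genL k Γ (Gen.vert w)))
      ↔ IsField k) :=
  sink_right_ideal_basis_and_simple_general k Γ w hw
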